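/- For every normalized block sequence (y_ℓ) in X_ius and every k ≥ m_2 there exists a finite linear combination of (y_ℓ) which is a normalized 2-ℓ_1^k average. -/

import Mathlib

open scoped BigOperators
open Classical

noncomputable section

/-- `c00`: the finitely supported real sequences on `ℕ`. -/
abbrev c00 : Type := ℕ →₀ ℝ

namespace Ius

/-- The unit vector `e_k` (also written `e_k^*` when viewed as a functional). -/
def e (k : ℕ) : c00 := Finsupp.single k 1

/-- The pairing `f(x) = ∑ k, f k * x k`. -/
def dot (f x : c00) : ℝ := x.sum fun k v => f k * v

/-- Every element of `A` is smaller than every element of `B`. -/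
def suppLt (A B : Finset ℕ) : Prop := ∀ a ∈ A, ∀ b ∈ B, a < b

/-- `x < y` for finitely supported vectors: `max supp x < min supp y`. -/
def blockLt (x y : c00) : Prop := suppLt x.support y.support

/-- `max supp x` (junk value `0` if the support is empty). -/
def maxSupp (x : c00) : ℕ := x.support.max.unbotD 0

/-- `min supp x` (junk value `0` if the support is empty). -/
def minSupp (x : c00) : ℕ := x.support.min.untopD 0

/-- `range x`: the smallest integer interval containing `supp x`. -/
def rangeI (x : c00) : Finset ℕ :=
  if h : x.support.Nonempty then Finset.Icc (x.support.min' h) (x.support.max' h) else ∅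

/-- `E ⊆ ℕ` is an interval. -/
def IsInterval (E : Set ℕ) : Prop := ∀ a ∈ E, ∀ b ∈ E, ∀ c : ℕ, a ≤ c → c ≤ b → c ∈ E

/-- Restriction `E x` of a vector `x` to a set of coordinates `E`. -/
def restrictTo (E : Set ℕ) (x : c00) : c00 :=
  letI := Classical.decPred fun k => k ∈ E
  Finsupp.filter (fun k => k ∈ E) x

/-- A block sequence: successive nonzero vectors. -/
def IsBlockSeq (x : ℕ → c00) : Prop := ∀ k, x k ≠ 0 ∧ blockLt (x k) (x (k + 1))

/-- A vector with rational coordinates. -/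
def IsRat (x : c00) : Prop := ∀ k, ∃ q : ℚ, x k = (q : ℝ)

/-- The set `Q`: finitely supported, nonzero rational sequences with sup-norm at most 1. -/
def Qset : Set c00 := {x | x ≠ 0 ∧ IsRat x ∧ ∀ k, |x k| ≤ 1}

/-- The set `Q_s` of tuples `(x_1,f_1,…,x_n,f_n)` of elements of `Q` with
`range(x_i) ∪ range(f_i) < range(x_{i+1}) ∪ range(f_{i+1})`. -/
def QsSet : Set (List (c00 × c00)) :=
  {φ | φ ≠ [] ∧ (∀ p ∈ φ, p.1 ∈ Qset ∧ p.2 ∈ Qset) ∧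
    φ.Chain' fun p q => suppLt (p.1.support ∪ p.2.support) (q.1.support ∪ q.2.support)}

/-- The parameters `(m_j)`, `(n_j)`, `(s_j)` of the construction. -/
structure Params where
  m : ℕ → ℕ
  n : ℕ → ℕ
  s : ℕ → ℕ
  m_one : m 1 = 2
  m_rec : ∀ j, 1 ≤ j → m (j + 1) = m j ^ 5
  n_one : n 1 = 4
  n_rec : ∀ j, 1 ≤ j → n (j + 1) = (4 * n j) ^ s j
  s_pos : ∀ j, 1 ≤ j → 1 ≤ s j
  s_big : ∀ j, 1 ≤ j → m (j + 1) ^ 3 ≤ 2 ^ s j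

/-- The coding function `σ`: an injection from `Q_s` into the even positive integers,
increasing along extensions, with `max (range(x_n) ∪ range(f_n)) ≤ m_{σ(φ)}^{1/2}`. -/
structure Coding (P : Params) where
  σ : List (c00 × c00) → ℕ
  even_pos : ∀ φ ∈ QsSet, ∃ k, 1 ≤ k ∧ σ φ = 2 * k
  inj : Set.InjOn σ QsSet
  mono : ∀ φ ∈ QsSet, φ.dropLast ∈ QsSet → σ φ.dropLast < σ φ
  bound : ∀ φ ∈ QsSet, ∀ p ∈ φ.getLast?, ∀ a ∈ p.1.support ∪ p.2.support,
    (a : ℝ) ≤ Real.sqrt (P.m (σ φ))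

/-- `x_i`: the `i`-th (1-indexed) vector entry of a tuple in `Q_s`. -/
def xC (φ : List (c00 × c00)) (i : ℕ) : c00 := (φ.getD (i - 1) (0, 0)).1

/-- `f_i`: the `i`-th (1-indexed) functional entry of a tuple in `Q_s`. -/
def fC (φ : List (c00 × c00)) (i : ℕ) : c00 := (φ.getD (i - 1) (0, 0)).2

/-- `φ_i = (x_1,f_1,…,x_i,f_i)`: the prefix of length `i`. -/
def pref (φ : List (c00 × c00)) (i : ℕ) : List (c00 × c00) := φ.take i

/-- `K_0 = {± e_n^*}`. -/
def K0set : Set c00 := {f | ∃ k, f = e k ∨ f = -e k}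

/-- The condition on `(x_1, f_1)` of a special sequence of length `2k`. -/
def headCond (P : Params) (k : ℕ) (x f : c00) : Prop :=
  ∃ j, 1 ≤ j ∧ (2 * k : ℝ) < Real.sqrt (P.m (2 * j)) ∧
    ∃ F : Finset ℕ, F.card = P.n (2 * j) ∧
      x = ((P.n (2 * j) : ℝ))⁻¹ • ∑ l ∈ F, e l ∧
      f = ((P.m (2 * j) : ℝ))⁻¹ • ∑ l ∈ F, e l

/-- `φ` is a special sequence (of length `2k` for some `k ≥ 1`). -/
def IsSpecialSeq (P : Params) (C : Coding P) (φ : List (c00 × c00)) : Prop :=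
  φ ∈ QsSet ∧ ∃ k, 1 ≤ k ∧ φ.length = 2 * k ∧
    headCond P k (xC φ 1) (fC φ 1) ∧
    (∀ i, 1 ≤ i → i ≤ k →
      (∀ t, |fC φ (2 * i) t| ≤ ((P.m (C.σ (pref φ (2 * i - 1))) : ℝ))⁻¹) ∧
      |dot (fC φ (2 * i)) (xC φ (2 * i))| ≤ ((P.m (C.σ (pref φ (2 * i - 1))) : ℝ))⁻¹) ∧
    (∀ i, 1 ≤ i → i < k →
      ∃ F : Finset ℕ, F.card = P.n (C.σ (pref φ (2 * i))) ∧
        xC φ (2 * i + 1) = ((P.n (C.σ (pref φ (2 * i))) : ℝ))⁻¹ • ∑ l ∈ F, e l ∧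
        fC φ (2 * i + 1) = ((P.m (C.σ (pref φ (2 * i))) : ℝ))⁻¹ • ∑ l ∈ F, e l)

/-- The condition defining the coefficients `λ_{f'_{2i}}`. -/
def lamCond (P : Params) (C : Coding P) (j : ℕ) (φ : List (c00 × c00))
    (f' : ℕ → c00) (lam : ℕ → ℝ) (i : ℕ) : Prop :=
  (dot (f' i) (xC φ (2 * i)) ≠ 0 →
    lam i = dot (f' i) (((P.m (C.σ (pref φ (2 * i - 1))) : ℝ)) • xC φ (2 * i))) ∧
  (dot (f' i) (xC φ (2 * i)) = 0 →
    lam i = 1 / (P.n (2 * j + 1) : ℝ) ^ 2 ∨ lam i = -(1 / (P.n (2 * j + 1) : ℝ) ^ 2))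

/-- The set `K_{n,φ}^{2j+1}` built from a special sequence `φ` over a previous level `prev`. -/
def KphiSet (P : Params) (C : Coding P) (prev : ℕ → Set c00) (j : ℕ)
    (φ : List (c00 × c00)) : Set c00 :=
  {f | ∃ ε : ℝ, (ε = 1 ∨ ε = -1) ∧ ∃ E : Set ℕ, IsInterval E ∧
    ∃ (f' : ℕ → c00) (lam : ℕ → ℝ),
      (∀ i, 1 ≤ i → 2 * i ≤ P.n (2 * j + 1) →
        f' i ∈ prev (C.σ (pref φ (2 * i - 1))) ∧
        (f' i).support = (fC φ (2 * i)).support ∧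
        (∀ g ∈ prev (C.σ (pref φ (2 * i - 1))),
          |dot g (xC φ (2 * i))| ≤ ((P.m (C.σ (pref φ (2 * i - 1))) : ℝ))⁻¹) ∧
        lamCond P C j φ f' lam i) ∧
      f = (ε * ((P.m (2 * j + 1) : ℝ))⁻¹) •
        restrictTo E (∑ i ∈ Finset.Icc 1 (P.n (2 * j + 1) / 2),
          (lam i • fC φ (2 * i - 1) + f' i))}

/-- Admissibility of a special sequence `φ` at a given level:
`f_{2i} ∈ K_{n-1}^{σ(φ_{2i-1})}`. -/
def SpecialAdm (P : Params) (C : Coding P) (prev : ℕ → Set c00) (j : ℕ)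
    (φ : List (c00 × c00)) : Prop :=
  IsSpecialSeq P C φ ∧ φ.length = P.n (2 * j + 1) ∧
    ∀ i, 1 ≤ i → 2 * i ≤ P.n (2 * j + 1) →
      fC φ (2 * i) ∈ prev (C.σ (pref φ (2 * i - 1)))

/-- The even operation `(A_{n_{2j}}, 1/m_{2j})`. -/
def evenStep (P : Params) (prev : ℕ → Set c00) (j : ℕ) : Set c00 :=
  {f | ∃ fs : List c00, fs ≠ [] ∧ fs.length ≤ P.n (2 * j) ∧
    (∀ g ∈ fs, ∃ j', g ∈ prev j') ∧ fs.Chain' blockLt ∧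
    f = ((P.m (2 * j) : ℝ))⁻¹ • fs.sum}

/-- The odd (special functional) operation. -/
def oddStep (P : Params) (C : Coding P) (prev : ℕ → Set c00) (j : ℕ) : Set c00 :=
  ⋃ φ ∈ {ψ : List (c00 × c00) | SpecialAdm P C prev j ψ}, KphiSet P C prev j φ

/-- The inductively defined family `K_n^j`. -/
def KF (P : Params) (C : Coding P) : ℕ → ℕ → Set c00
  | 0, j => if j = 0 then K0set else ∅
  | N + 1, j =>
      if j = 0 then K0set
      else if j = 1 then ∅
      else if j % 2 = 0 then KF P C N j ∪ evenStep P (KF P C N) (j / 2)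
      else KF P C N j ∪ oddStep P C (KF P C N) (j / 2)

/-- The norming set `K = ⋃_n ⋃_j K_n^j` of the space `X_ius`. -/
def Kset (P : Params) (C : Coding P) : Set c00 := ⋃ N, ⋃ j, KF P C N j

/-- `f` has weight `w(f) = m_j`, i.e. `f ∈ K_n^j` for some `n ≥ 1`. -/
def KHasWeight (P : Params) (C : Coding P) (f : c00) (w : ℕ) : Prop :=
  ∃ N j, 1 ≤ j ∧ f ∈ KF P C (N + 1) j ∧ w = P.m j

/-- The norm of `X_ius` on `c00`: `‖x‖ = sup {f(x) : f ∈ K}`. -/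
def normK (P : Params) (C : Coding P) (x : c00) : ℝ :=
  sSup ((fun f => dot f x) '' Kset P C)

/-- The set `K̃`. -/
def Ktilde (P : Params) : Set c00 :=
  K0set ∪ {f | ∃ j, 1 ≤ j ∧ ∃ F : Finset ℕ, F.card ≤ P.n (2 * j) ∧
    ∃ ε : ℕ → ℝ, (∀ i, ε i = 1 ∨ ε i = -1) ∧
      f = ((P.m (2 * j) : ℝ))⁻¹ • ∑ i ∈ F, ε i • e i} ∪ {0}

/-- `‖x‖_K̃ = sup {f(x) : f ∈ K̃}`. -/
def normKt (P : Params) (x : c00) : ℝ := sSup ((fun f => dot f x) '' Ktilde P)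

/-- The norming family `W_n` of the auxiliary mixed Tsirelson space
`X_u = T[(A_{4n_j},1/m_j)_j]`. -/
def WF (P : Params) : ℕ → Set c00
  | 0 => K0set ∪ {0}
  | N + 1 => WF P N ∪ {f | ∃ j, 1 ≤ j ∧ ∃ fs : List c00, fs ≠ [] ∧
      fs.length ≤ 4 * P.n j ∧ (∀ g ∈ fs, g ∈ WF P N) ∧ fs.Chain' blockLt ∧
      f = ((P.m j : ℝ))⁻¹ • fs.sum}

/-- The norming set `W` of `X_u`. -/
def Wset (P : Params) : Set c00 := ⋃ N, WF P N

/-- The norming family of `X_{u,k} = T[(A_{4n_j},1/m_j)_{j=1}^k]`. -/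
def WFk (P : Params) (k : ℕ) : ℕ → Set c00
  | 0 => K0set ∪ {0}
  | N + 1 => WFk P k N ∪ {f | ∃ j, 1 ≤ j ∧ j ≤ k ∧ ∃ fs : List c00, fs ≠ [] ∧
      fs.length ≤ 4 * P.n j ∧ (∀ g ∈ fs, g ∈ WFk P k N) ∧ fs.Chain' blockLt ∧
      f = ((P.m j : ℝ))⁻¹ • fs.sum}

/-- The norming set `W^{(k)}` of `X_{u,k}`. -/
def Wk (P : Params) (k : ℕ) : Set c00 := ⋃ N, WFk P k N

/-- `f ∈ W` has weight `w(f) = m_j`. -/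
def WHasWeight (P : Params) (f : c00) (w : ℕ) : Prop :=
  ∃ j, 1 ≤ j ∧ w = P.m j ∧ ∃ fs : List c00, fs ≠ [] ∧ fs.length ≤ 4 * P.n j ∧
    (∀ g ∈ fs, g ∈ Wset P) ∧ fs.Chain' blockLt ∧ f = ((P.m j : ℝ))⁻¹ • fs.sum

/-- `f` admits a tree in `W` all of whose non-terminal nodes have weight `≠ w0`. -/
inductive WTreeAvoid (P : Params) (w0 : ℕ) : c00 → Prop
  | leaf (f : c00) (hf : f ∈ K0set ∪ {0}) : WTreeAvoid P w0 f
  | node (j : ℕ) (hj : 1 ≤ j) (hw : P.m j ≠ w0) (fs : List c00) (hne : fs ≠ [])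
      (hlen : fs.length ≤ 4 * P.n j) (hch : fs.Chain' blockLt)
      (hmem : ∀ g ∈ fs, WTreeAvoid P w0 g) :
      WTreeAvoid P w0 (((P.m j : ℝ))⁻¹ • fs.sum)

/-- `q_j = 1/log_{4n_j}(m_j) = log (4 n_j) / log (m_j)`. -/
def qexp (P : Params) (j : ℕ) : ℝ := Real.log (4 * (P.n j : ℝ)) / Real.log (P.m j : ℝ)

/-- `p_j = 1/(1 - log_{4n_j}(m_j))`, the conjugate exponent of `q_j`. -/
def pexp (P : Params) (j : ℕ) : ℝ :=
  1 / (1 - Real.log (P.m j : ℝ) / Real.log (4 * (P.n j : ℝ)))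

/-- `x` is a `C`-`ℓ_1^k` average. -/
def IsL1Avg (P : Params) (C : Coding P) (Cc : ℝ) (k : ℕ) (x : c00) : Prop :=
  ∃ xs : ℕ → c00, (∀ i, i + 1 < k → blockLt (xs i) (xs (i + 1))) ∧
    (∀ i < k, normK P C (xs i) ≤ Cc * normK P C x) ∧
    x = ((k : ℝ))⁻¹ • ∑ i ∈ Finset.range k, xs i

/-- `(x_k)_{k<N}` is a `(C,ε)`-rapidly increasing sequence. -/
def IsRIS (P : Params) (C : Coding P) (Cc ε : ℝ) (N : ℕ) (x : ℕ → c00) : Prop :=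
  (∀ k, k + 1 < N → blockLt (x k) (x (k + 1))) ∧
  ∃ jk : ℕ → ℕ, StrictMono jk ∧ (∀ k, 1 ≤ jk k) ∧
    ∀ k < N, normK P C (x k) ≤ Cc ∧
      ((rangeI (x k)).card : ℝ) / (P.m (jk (k + 1)) : ℝ) < ε ∧
      ∀ f ∈ Kset P C, ∀ w, KHasWeight P C f w → (w : ℝ) < (P.m (jk k) : ℝ) →
        |dot f (x k)| ≤ Cc / (w : ℝ)

/-- `(x_k)_{k<N}` is a `(C,ε)`-rapidly increasing sequence of `ℓ_1` averages. -/
def IsRISofAvgs (P : Params) (C : Coding P) (Cc ε : ℝ) (N : ℕ) (x : ℕ → c00) : Prop :=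
  (∀ k, k + 1 < N → blockLt (x k) (x (k + 1))) ∧
  ∃ jk : ℕ → ℕ, StrictMono jk ∧ (∀ k, 1 ≤ jk k) ∧
    ∀ k < N, normK P C (x k) = 1 ∧ IsL1Avg P C (2 * Cc / 3) (P.n (jk k)) (x k) ∧
      ((rangeI (x k)).card : ℝ) / (P.m (jk (k + 1)) : ℝ) < ε

/-- `χ` is a depended sequence of length `n_{2j+1}`. -/
def IsDependedSeq (P : Params) (C : Coding P) (j : ℕ) (χ : List (c00 × c00)) : Prop :=
  χ.length = P.n (2 * j + 1) ∧
  ∃ φ : List (c00 × c00), IsSpecialSeq P C φ ∧ φ.length = P.n (2 * j + 1) ∧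
    (∀ i, 1 ≤ i → i ≤ P.n (2 * j + 1) → fC χ i = fC φ i) ∧
    (∀ i, 1 ≤ i → 2 * i - 1 ≤ P.n (2 * j + 1) → xC χ (2 * i - 1) = xC φ (2 * i - 1)) ∧
    (∀ i, 1 ≤ i → 2 * i ≤ P.n (2 * j + 1) →
      (xC φ (2 * i)).support = (xC χ (2 * i)).support ∧
      normK P C (xC φ (2 * i) - xC χ (2 * i)) ≤
        1 / (P.n (C.σ (pref φ (2 * i - 1))) : ℝ) ^ 2 ∧
      (∃ c : ℝ, 0 < c ∧ c < 1 ∧ ∃ xs : ℕ → c00,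
        IsRISofAvgs P C 3 (1 / (P.n (C.σ (pref φ (2 * i - 1))) : ℝ))
          (P.n (C.σ (pref φ (2 * i - 1)))) xs ∧
        xC χ (2 * i) = (c / (P.n (C.σ (pref φ (2 * i - 1))) : ℝ)) •
          ∑ l ∈ Finset.range (P.n (C.σ (pref φ (2 * i - 1)))), xs l) ∧
      1 / (12 * (P.m (C.σ (pref φ (2 * i - 1))) : ℝ)) ≤
        dot (fC χ (2 * i)) (xC χ (2 * i)))

/-- The canonical map `c00 → X` sending `x` to `∑ k, x k • e' k`. -/
def lift {X : Type*} [AddCommGroup X] [Module ℝ X] (e' : ℕ → X) (x : c00) : X :=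
  x.sum fun k a => a • e' k

/-- `X`, together with the sequence `e'`, is a realization of the space `X_ius`:
the completion of `c00` under `‖·‖_K`, with `e'` the natural basis. -/
structure IsIusRep (P : Params) (C : Coding P) {X : Type*} [NormedAddCommGroup X]
    [NormedSpace ℝ X] (e' : ℕ → X) : Prop where
  norm_eq : ∀ x : c00, ‖lift e' x‖ = normK P C x
  dense : DenseRange (lift e')

/-- A bounded operator `S` is strictly singular: its restriction to no
infinite-dimensional closed subspace is an isomorphism onto its image
(i.e. it is bounded below on no such subspace). -/
def StrictlySingular {X : Type*} [NormedAddCommGroup X] [NormedSpace ℝ X]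
    (S : X →L[ℝ] X) : Prop :=
  ∀ Y : Submodule ℝ X, IsClosed (Y : Set X) → ¬ FiniteDimensional ℝ Y →
    ¬ ∃ c : ℝ, 0 < c ∧ ∀ y ∈ Y, c * ‖y‖ ≤ ‖S y‖

end Ius

/-!
Group the block sequence into the sums `T_s(t) = y_{t k^s} + ⋯ + y_{(t+1) k^s - 1}`, so that
`T_{s+1}(t)` is the sum of the `k` successive vectors `T_s(tk), …, T_s(tk + k - 1)`. If no
normalized `2`-`ℓ_1^k` average were a combination of the `y_ℓ`, then `T_{s+1}(t)/‖T_{s+1}(t)‖` is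
not one, so one of these pieces has norm more than `2‖T_{s+1}(t)‖/k`; inductively
`‖T_s(t)‖ ≤ (k/2)^s`. On the other hand, restricting norming functionals of the `y_ℓ` to their
ranges and combining them by the even operation `(A_{n_{2k}}, 1/m_{2k})` gives
`‖T_s(t)‖ ≥ k^s/m_{2k}` whenever `k^s ≤ n_{2k}`. For `s = s_{2k-1}` this forces `2^s ≤ m_{2k}`,
against `m_{2k}^3 ≤ 2^s`.
-/

theorem Finset.sum_range_mul_eq_sum_sum {M : Type*} [AddCommMonoid M] (f : ℕ → M) (k n : ℕ) :
    ∑ i ∈ Finset.range (k * n), f i =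
      ∑ r ∈ Finset.range k, ∑ q ∈ Finset.range n, f (r * n + q) := by
  induction k with
  | zero => simp
  | succ k ih => rw [Nat.succ_mul, Finset.sum_range_add, ih, Finset.sum_range_succ]

theorem List.sum_filter_ne_zero {M : Type*} [AddMonoid M] [DecidableEq M] (l : List M) :
    (l.filter (· ≠ 0)).sum = l.sum := by
  induction l with
  | nil => rfl
  | cons a l ih =>
    rw [List.filter_cons]
    split_ifs with ha
    · rw [List.sum_cons, List.sum_cons, ih]
    · rw [ih, List.sum_cons, show a = 0 by simpa using ha, zero_add]

namespace Ius

section Pairing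

lemma dot_zero_left (x : c00) : dot 0 x = 0 := by
  simp [dot]

lemma dot_add_left (f g x : c00) : dot (f + g) x = dot f x + dot g x := by
  simp only [dot, Finsupp.coe_add, Pi.add_apply, add_mul, Finsupp.sum_add]

lemma dot_smul_left (c : ℝ) (f x : c00) : dot (c • f) x = c * dot f x := by
  simp only [dot, Finsupp.coe_smul, Pi.smul_apply, smul_eq_mul, mul_assoc, Finsupp.mul_sum]

lemma dot_finset_sum_left {ι : Type*} (s : Finset ι) (f : ι → c00) (x : c00) :
    dot (∑ i ∈ s, f i) x = ∑ i ∈ s, dot (f i) x :=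
  map_sum (AddMonoidHom.mk' (dot · x) fun f g => dot_add_left f g x) f s

lemma dot_add_right (f x y : c00) : dot f (x + y) = dot f x + dot f y :=
  Finsupp.sum_add_index' (fun _ => mul_zero _) fun _ _ _ => mul_add _ _ _

lemma dot_smul_right (c : ℝ) (f x : c00) : dot f (c • x) = c * dot f x := by
  rw [dot, Finsupp.sum_smul_index' fun _ => mul_zero _, dot, Finsupp.mul_sum]
  simp only [smul_eq_mul, mul_left_comm]

lemma dot_finset_sum_right {ι : Type*} (f : c00) (s : Finset ι) (x : ι → c00) :
    dot f (∑ i ∈ s, x i) = ∑ i ∈ s, dot f (x i) :=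
  map_sum (AddMonoidHom.mk' (dot f) (dot_add_right f)) x s

lemma dot_eq_zero_of_disjoint {f x : c00} (h : Disjoint f.support x.support) : dot f x = 0 :=
  Finset.sum_eq_zero fun t ht => by
    simp only [Finsupp.notMem_support_iff.mp (Finset.disjoint_right.mp h ht), zero_mul]

lemma dot_congr_left {f g x : c00} (h : ∀ t ∈ x.support, f t = g t) : dot f x = dot g x :=
  Finset.sum_congr rfl fun t ht => by simp only [h t ht]

end Pairing

section Restriction

lemma restrictTo_apply (E : Set ℕ) (x : c00) (t : ℕ) :
    restrictTo E x t = if t ∈ E then x t else 0 := by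
  simp [restrictTo, Finsupp.filter_apply]

lemma mem_of_mem_support_restrictTo {E : Set ℕ} {x : c00} {t : ℕ}
    (ht : t ∈ (restrictTo E x).support) : t ∈ E := by
  by_contra h
  exact Finsupp.mem_support_iff.mp ht (by rw [restrictTo_apply, if_neg h])

lemma support_restrictTo_subset (E : Set ℕ) (x : c00) :
    (restrictTo E x).support ⊆ x.support := by
  intro t ht
  rw [Finsupp.mem_support_iff, restrictTo_apply] at ht
  rw [Finsupp.mem_support_iff]
  split_ifs at ht
  exacts [ht, absurd rfl ht]

lemma restrictTo_smul (E : Set ℕ) (c : ℝ) (x : c00) :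
    restrictTo E (c • x) = c • restrictTo E x := by
  ext t
  simp only [restrictTo_apply, Finsupp.smul_apply, smul_ite, smul_zero]

lemma restrictTo_list_sum (E : Set ℕ) (l : List c00) :
    restrictTo E l.sum = (l.map (restrictTo E)).sum :=
  map_list_sum (Finsupp.filterAddHom _) l

lemma restrictTo_restrictTo (E F : Set ℕ) (x : c00) :
    restrictTo E (restrictTo F x) = restrictTo (E ∩ F) x := by
  ext t
  simp only [restrictTo_apply, Set.mem_inter_iff, ite_and]

lemma restrictTo_single (E : Set ℕ) (k : ℕ) (c : ℝ) :
    restrictTo E (Finsupp.single k c) = if k ∈ E then Finsupp.single k c else 0 := by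
  split_ifs with hk
  · exact Finsupp.filter_single_of_pos _ hk
  · exact Finsupp.filter_single_of_neg _ hk

lemma dot_restrictTo {E : Set ℕ} {f x : c00} (h : ∀ t ∈ x.support, t ∈ E) :
    dot (restrictTo E f) x = dot f x :=
  dot_congr_left fun t ht => by rw [restrictTo_apply, if_pos (h t ht)]

lemma IsInterval.inter {E F : Set ℕ} (hE : IsInterval E) (hF : IsInterval F) :
    IsInterval (E ∩ F) :=
  fun a ha b hb c hac hcb => ⟨hE a ha.1 b hb.1 c hac hcb, hF a ha.2 b hb.2 c hac hcb⟩

end Restriction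

section Blocks

lemma mem_rangeI {x : c00} {t : ℕ} :
    t ∈ rangeI x ↔ ∃ a ∈ x.support, ∃ b ∈ x.support, a ≤ t ∧ t ≤ b := by
  unfold rangeI
  split_ifs with h
  · rw [Finset.mem_Icc]
    refine ⟨fun ht => ⟨_, Finset.min'_mem _ h, _, Finset.max'_mem _ h, ht⟩, ?_⟩
    rintro ⟨a, ha, b, hb, hat, htb⟩
    exact ⟨(Finset.min'_le _ a ha).trans hat, htb.trans (Finset.le_max' _ b hb)⟩
  · simp [Finset.not_nonempty_iff_eq_empty.mp h]

lemma support_subset_rangeI (x : c00) : x.support ⊆ rangeI x :=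
  fun t ht => mem_rangeI.mpr ⟨t, ht, t, ht, le_rfl, le_rfl⟩

lemma isInterval_rangeI (x : c00) : IsInterval (rangeI x : Set ℕ) := by
  intro a ha b hb c hac hcb
  obtain ⟨a', ha', -, -, ha'a, -⟩ := mem_rangeI.mp ha
  obtain ⟨-, -, b', hb', -, hbb'⟩ := mem_rangeI.mp hb
  exact mem_rangeI.mpr ⟨a', ha', b', hb', ha'a.trans hac, hcb.trans hbb'⟩

lemma blockLt.mono {x y x' y' : c00} (h : blockLt x y) (hx : x'.support ⊆ rangeI x)
    (hy : y'.support ⊆ rangeI y) : blockLt x' y' := by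
  intro s hs t ht
  obtain ⟨-, -, b, hb, -, hsb⟩ := mem_rangeI.mp (hx hs)
  obtain ⟨a, ha, -, -, hat, -⟩ := mem_rangeI.mp (hy ht)
  exact hsb.trans_lt ((h b hb a ha).trans_le hat)

lemma blockLt.trans {x y z : c00} (hy : y ≠ 0) (hxy : blockLt x y) (hyz : blockLt y z) :
    blockLt x z := by
  obtain ⟨t, ht⟩ := Finsupp.support_nonempty_iff.mpr hy
  exact fun a ha b hb => (hxy a ha t ht).trans (hyz t ht b hb)

lemma blockLt.disjoint {x y : c00} (h : blockLt x y) : Disjoint x.support y.support :=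
  Finset.disjoint_left.mpr fun {_} ha hb => lt_irrefl _ (h _ ha _ hb)

lemma blockLt.restrict {x y : c00} (h : blockLt x y) (E F : Set ℕ) :
    blockLt (restrictTo E x) (restrictTo F y) :=
  fun s hs t ht => h s (support_restrictTo_subset E x hs) t (support_restrictTo_subset F y ht)

lemma pairwise_blockLt_of_isChain {l : List c00} (h0 : ∀ g ∈ l, g ≠ 0)
    (h : l.IsChain blockLt) : l.Pairwise blockLt := by
  let R : c00 → c00 → Prop := fun a b => blockLt a b ∧ b ≠ 0
  have : Trans R R R := ⟨fun hab hbc => ⟨hab.1.trans hab.2 hbc.1, hbc.2⟩⟩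
  exact ((h.imp_of_mem_imp fun _ b _ hb hab => ⟨hab, h0 b hb⟩).pairwise).imp And.left

lemma IsBlockSeq.blockLt_of_lt {y : ℕ → c00} (hy : IsBlockSeq y) {i j : ℕ} (hij : i < j) :
    blockLt (y i) (y j) := by
  induction j, hij using Nat.le_induction with
  | base => exact (hy i).2
  | succ j _ ih => exact ih.trans (hy j).1 (hy j).2

end Blocks

lemma Params.two_le_m (P : Params) {j : ℕ} (hj : 1 ≤ j) : 2 ≤ P.m j := by
  induction j, hj using Nat.le_induction with
  | base => exact P.m_one.ge
  | succ j hj ih => exact P.m_rec j hj ▸ ih.trans (Nat.le_self_pow (by norm_num) _)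

lemma Params.le_n (P : Params) {j : ℕ} (hj : 1 ≤ j) : j ≤ P.n j := by
  induction j, hj using Nat.le_induction with
  | base => exact P.n_one ▸ by norm_num
  | succ j hj ih =>
    rw [P.n_rec j hj]
    exact le_trans (by omega) (Nat.le_self_pow (by have := P.s_pos j hj; omega) _)

section NormingSet

variable (P : Params) (C : Coding P)

lemma KF_mono (j : ℕ) : Monotone fun N => KF P C N j := by
  refine monotone_nat_of_le_succ fun N f hf => ?_
  cases N <;> rw [KF] <;> split_ifs <;> simp_all [KF]

lemma mem_Kset {f : c00} {N j : ℕ} (hf : f ∈ KF P C N j) : f ∈ Kset P C :=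
  Set.mem_iUnion₂.mpr ⟨N, j, hf⟩

lemma exists_KF_of_forall_mem_Kset (l : List c00) (hl : ∀ g ∈ l, g ∈ Kset P C) :
    ∃ N, ∀ g ∈ l, ∃ j, g ∈ KF P C N j := by
  induction l with
  | nil => exact ⟨0, by simp⟩
  | cons a l ih =>
    obtain ⟨N, hN⟩ := ih fun g hg => hl g (List.mem_cons_of_mem a hg)
    obtain ⟨M, j, ha⟩ := Set.mem_iUnion₂.mp (hl a List.mem_cons_self)
    refine ⟨max M N, fun g hg => ?_⟩
    rcases List.mem_cons.mp hg with rfl | hg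
    · exact ⟨j, KF_mono P C j (le_max_left M N) ha⟩
    · obtain ⟨j', hj'⟩ := hN g hg
      exact ⟨j', KF_mono P C j' (le_max_right M N) hj'⟩

lemma evenStep_subset_KF {N J : ℕ} (hJ : 1 ≤ J) :
    evenStep P (KF P C N) J ⊆ KF P C (N + 1) (2 * J) := by
  intro f hf
  rw [KF, if_neg (by omega), if_neg (by omega), if_pos (by omega),
    Nat.mul_div_cancel_left J two_pos]
  exact Or.inr hf

lemma smul_sum_mem_Kset {J : ℕ} (hJ : 1 ≤ J) {l : List c00} (hne : l ≠ [])
    (hlen : l.length ≤ P.n (2 * J)) (hK : ∀ g ∈ l, g ∈ Kset P C) (hch : l.IsChain blockLt) :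
    ((P.m (2 * J) : ℝ))⁻¹ • l.sum ∈ Kset P C := by
  obtain ⟨N, hN⟩ := exists_KF_of_forall_mem_Kset P C l hK
  exact mem_Kset P C (evenStep_subset_KF P C hJ ⟨l, hne, hlen, hN, hch, rfl⟩)

lemma restrictTo_mem_oddStep {prev : ℕ → Set c00} {j : ℕ} {E : Set ℕ} (hE : IsInterval E)
    {f : c00} (hf : f ∈ oddStep P C prev j) : restrictTo E f ∈ oddStep P C prev j := by
  simp only [oddStep, Set.mem_iUnion₂] at hf ⊢
  obtain ⟨φ, hφ, ε, hε, E₀, hE₀, f', lam, hcond, rfl⟩ := hf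
  exact ⟨φ, hφ, ε, hε, E ∩ E₀, hE.inter hE₀, f', lam, hcond,
    by rw [restrictTo_smul, restrictTo_restrictTo]⟩

lemma restrictTo_mem_of_mem_K0set (E : Set ℕ) {f : c00} (hf : f ∈ K0set) :
    restrictTo E f ∈ Kset P C ∨ restrictTo E f = 0 := by
  have hK0 : K0set ⊆ Kset P C := fun g hg => mem_Kset P C (N := 0) (j := 0) hg
  obtain ⟨k, rfl | rfl⟩ := hf
  · rw [e, restrictTo_single]
    split_ifs
    exacts [Or.inl (hK0 ⟨k, Or.inl rfl⟩), Or.inr rfl]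
  · rw [e, ← Finsupp.single_neg, restrictTo_single]
    split_ifs
    exacts [Or.inl (hK0 ⟨k, Or.inr (by rw [e, Finsupp.single_neg])⟩), Or.inr rfl]

lemma restrictTo_mem_of_mem_evenStep {N J : ℕ} (hJ : 1 ≤ J) {E : Set ℕ}
    (ih : ∀ j g, g ∈ KF P C N j → restrictTo E g ∈ Kset P C ∨ restrictTo E g = 0)
    {f : c00} (hf : f ∈ evenStep P (KF P C N) J) :
    restrictTo E f ∈ Kset P C ∨ restrictTo E f = 0 := by
  obtain ⟨fs, hne, hlen, hmem, hch, rfl⟩ := hf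
  have hfsK : ∀ g ∈ fs, g ∈ Kset P C := fun g hg =>
    let ⟨j, hj⟩ := hmem g hg; mem_Kset P C hj
  set rs := fs.map (restrictTo E)
  have hrs : ∀ g ∈ rs, g ∈ Kset P C ∨ g = 0 := by
    simp only [rs, List.mem_map, forall_exists_index, and_imp, forall_apply_eq_imp_iff₂]
    exact fun g hg => let ⟨j, hj⟩ := hmem g hg; ih j g hj
  have hsum : restrictTo E (((P.m (2 * J) : ℝ))⁻¹ • fs.sum) = ((P.m (2 * J) : ℝ))⁻¹ • rs.sum := by
    rw [restrictTo_smul, restrictTo_list_sum]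
  rw [hsum]
  by_cases h0 : (0 : c00) ∈ Kset P C
  · refine Or.inl (smul_sum_mem_Kset P C hJ (by simpa [rs]) (by simpa [rs])
      (fun g hg => (hrs g hg).elim id (· ▸ h0)) ?_)
    exact List.isChain_map_of_isChain _ (fun _ _ hab => hab.restrict E E) hch
  -- Now no member of `K` is zero, so the chain `fs` is pairwise successive (a chain through a
  -- zero term would not be) and the zero restrictions can be dropped.
  rw [← List.sum_filter_ne_zero rs]
  set zs := rs.filter (· ≠ 0)
  rcases eq_or_ne zs [] with hz | hz
  · exact Or.inr (by rw [hz, List.sum_nil, smul_zero])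
  refine Or.inl (smul_sum_mem_Kset P C hJ hz
    (((List.length_filter_le _ _).trans (List.length_map _).le).trans hlen)
    (fun g hg => ?_) ?_)
  · obtain ⟨hg, hg0⟩ := List.mem_filter.mp hg
    exact (hrs g hg).resolve_right (by simpa using hg0)
  · have hfs : fs.Pairwise blockLt :=
      pairwise_blockLt_of_isChain (fun g hg hg0 => h0 (hg0 ▸ hfsK g hg)) hch
    exact ((hfs.map _ fun _ _ hab => hab.restrict E E).filter _).isChain

lemma restrictTo_mem_Kset_or_eq_zero {E : Set ℕ} (hE : IsInterval E) {N j : ℕ} {f : c00}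
    (hf : f ∈ KF P C N j) : restrictTo E f ∈ Kset P C ∨ restrictTo E f = 0 := by
  induction N generalizing j f with
  | zero =>
    rw [KF] at hf
    split_ifs at hf
    exacts [restrictTo_mem_of_mem_K0set P C E hf, absurd hf (Set.notMem_empty f)]
  | succ N ih =>
    rw [KF] at hf
    split_ifs at hf with h0 h1 h2
    · exact restrictTo_mem_of_mem_K0set P C E hf
    · exact absurd hf (Set.notMem_empty f)
    · rcases hf with hf | hf
      exacts [ih hf, restrictTo_mem_of_mem_evenStep P C (by omega) (fun _ _ => ih) hf]
    · rcases hf with hf | hf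
      · exact ih hf
      · refine Or.inl (mem_Kset P C (N := N + 1) (j := j) ?_)
        rw [KF, if_neg h0, if_neg h1, if_neg h2]
        exact Or.inr (restrictTo_mem_oddStep P C hE hf)

end NormingSet

section Norm

variable (P : Params) (C : Coding P)

open scoped Pointwise in
lemma normK_smul {c : ℝ} (hc : 0 ≤ c) (x : c00) : normK P C (c • x) = c * normK P C x := by
  have : (fun f => dot f (c • x)) '' Kset P C = c • (fun f => dot f x) '' Kset P C := by
    rw [← Set.image_smul, Set.image_image]
    simp only [dot_smul_right, smul_eq_mul]
  rw [normK, this, Real.sSup_smul_of_nonneg hc, smul_eq_mul, normK]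

lemma dot_le_normK {x f : c00} (hx : BddAbove ((fun f => dot f x) '' Kset P C))
    (hf : f ∈ Kset P C) : dot f x ≤ normK P C x :=
  le_csSup hx ⟨f, hf, rfl⟩

lemma bddAbove_dot_sum {ι : Type*} (s : Finset ι) {x : ι → c00}
    (hx : ∀ i ∈ s, normK P C (x i) = 1) :
    BddAbove ((fun f => dot f (∑ i ∈ s, x i)) '' Kset P C) := by
  refine ⟨s.card, ?_⟩
  rintro _ ⟨f, hf, rfl⟩
  change dot f _ ≤ _
  rw [dot_finset_sum_right, ← mul_one (s.card : ℝ), ← nsmul_eq_mul]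
  refine Finset.sum_le_card_nsmul _ _ 1 fun i hi => ?_
  have hbdd : BddAbove ((fun f => dot f (x i)) '' Kset P C) := by
    by_contra h
    exact zero_ne_one ((Real.sSup_of_not_bddAbove h).symm.trans (hx i hi))
  exact hx i hi ▸ dot_le_normK P C hbdd hf

lemma exists_mem_Kset_support_subset_rangeI {x : c00} {r : ℝ} (hr : 0 ≤ r)
    (hrx : r < normK P C x) : ∃ f ∈ Kset P C, f.support ⊆ rangeI x ∧ r < dot f x := by
  have hK : (Kset P C).Nonempty := ⟨e 0, mem_Kset P C (N := 0) (j := 0) ⟨0, Or.inl rfl⟩⟩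
  obtain ⟨_, ⟨F, hF, rfl⟩, hFr : r < dot F x⟩ := exists_lt_of_lt_csSup (hK.image _) hrx
  obtain ⟨N, j, hFN⟩ := Set.mem_iUnion₂.mp hF
  have hdot : dot (restrictTo (rangeI x) F) x = dot F x :=
    dot_restrictTo fun t ht => support_subset_rangeI x ht
  rcases restrictTo_mem_Kset_or_eq_zero P C (isInterval_rangeI x) hFN with hK | h0
  · exact ⟨_, hK, fun t ht => mem_of_mem_support_restrictTo ht, hdot ▸ hFr⟩
  · rw [h0, dot_zero_left] at hdot
    exact absurd (hdot ▸ hFr) hr.not_gt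

end Norm

section Estimates

variable (P : Params) (C : Coding P) {y : ℕ → c00}

lemma div_le_normK_sum (hy : IsBlockSeq y) (hny : ∀ ℓ, normK P C (y ℓ) = 1) {J d : ℕ}
    (hJ : 1 ≤ J) (hd : d ≠ 0) (hdn : d ≤ P.n (2 * J)) (a : ℕ) :
    (d : ℝ) / P.m (2 * J) ≤ normK P C (∑ i ∈ Finset.range d, y (a + i)) := by
  set T := ∑ i ∈ Finset.range d, y (a + i)
  have hm : (0 : ℝ) < P.m (2 * J) := by
    have := P.two_le_m (j := 2 * J) (by omega); positivity
  have hc : (0 : ℝ) < d / P.m (2 * J) := by positivity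
  suffices key : ∀ r : ℝ, 0 ≤ r → r < 1 → r * (d / P.m (2 * J)) ≤ normK P C T by
    refine le_of_forall_lt_imp_le_of_dense fun b hb => (le_max_left b 0).trans ?_
    have := key (max b 0 / (d / P.m (2 * J))) (by positivity)
      ((div_lt_one hc).mpr (max_lt hb hc))
    rwa [div_mul_cancel₀ _ hc.ne'] at this
  intro r hr0 hr1
  choose g hgK hgsupp hgr using fun i =>
    exists_mem_Kset_support_subset_rangeI P C hr0 ((hny i).symm ▸ hr1 : r < normK P C (y i))
  have hcross : ∀ i j, i ≠ j → dot (g i) (y j) = 0 := by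
    intro i j hij
    apply dot_eq_zero_of_disjoint
    rcases hij.lt_or_gt with h | h
    · exact ((hy.blockLt_of_lt h).mono (hgsupp i) (support_subset_rangeI _)).disjoint
    · exact ((hy.blockLt_of_lt h).mono (support_subset_rangeI _) (hgsupp i)).disjoint.symm
  set L := (List.range d).map fun i => g (a + i)
  have hL : L.sum = ∑ i ∈ Finset.range d, g (a + i) := by
    rw [Finset.sum_eq_multiset_sum]; rfl
  have hchain : L.IsChain blockLt := by
    refine List.isChain_map_of_isChain _ (fun i j (hij : j = i + 1) => ?_)
      ((List.isChain_range _ _).mpr fun i _ => rfl)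
    exact (hy.blockLt_of_lt (by omega : a + i < a + j)).mono (hgsupp _) (hgsupp _)
  have hG := smul_sum_mem_Kset P C hJ (l := L) (by simp [L, hd]) (by simpa [L])
    (by simp [L, hgK]) hchain
  calc r * (d / P.m (2 * J)) = ((P.m (2 * J) : ℝ))⁻¹ * ∑ i ∈ Finset.range d, r := by
        rw [Finset.sum_const, Finset.card_range, nsmul_eq_mul]; ring
    _ ≤ ((P.m (2 * J) : ℝ))⁻¹ * ∑ i ∈ Finset.range d, dot (g (a + i)) (y (a + i)) := by
        gcongr with i; exact (hgr _).le
    _ = dot (((P.m (2 * J) : ℝ))⁻¹ • L.sum) T := by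
        rw [dot_smul_left, hL, dot_finset_sum_left]
        refine congrArg _ (Finset.sum_congr rfl fun i hi => ?_)
        rw [dot_finset_sum_right, Finset.sum_eq_single_of_mem i hi
          fun j _ hji => hcross _ _ (by omega)]
    _ ≤ normK P C T :=
        dot_le_normK P C (bddAbove_dot_sum P C _ fun i _ => hny (a + i)) hG

lemma exists_lt_normK_of_not_isL1Avg {k : ℕ} (hk : 0 < k) {x : ℕ → c00}
    (hx : ∀ r, r + 1 < k → blockLt (x r) (x (r + 1)))
    (hS : 0 < normK P C (∑ r ∈ Finset.range k, x r))
    (hnot : ¬ IsL1Avg P C 2 k ((normK P C (∑ r ∈ Finset.range k, x r))⁻¹ •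
      ∑ r ∈ Finset.range k, x r)) :
    ∃ r < k, 2 * normK P C (∑ r ∈ Finset.range k, x r) < k * normK P C (x r) := by
  set S := ∑ r ∈ Finset.range k, x r
  by_contra! hle
  have hkR : (0 : ℝ) < k := Nat.cast_pos.mpr hk
  refine hnot ⟨fun r => (k / normK P C S) • x r, fun r hr => ?_, fun r hr => ?_, ?_⟩
  · exact blockLt.mono (hx r hr) (Finsupp.support_smul.trans (support_subset_rangeI _))
      (Finsupp.support_smul.trans (support_subset_rangeI _))
  · rw [normK_smul P C (by positivity), normK_smul P C (by positivity), inv_mul_cancel₀ hS.ne',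
      mul_one, div_mul_eq_mul_div, div_le_iff₀ hS]
    exact hle r hr
  · rw [← Finset.smul_sum, smul_smul, inv_mul_eq_div, div_div_cancel_left' hkR.ne']

def blockSum (y : ℕ → c00) (k s t : ℕ) : c00 := ∑ i ∈ Finset.range (k ^ s), y (t * k ^ s + i)

lemma blockSum_succ (k s t : ℕ) :
    blockSum y k (s + 1) t = ∑ r ∈ Finset.range k, blockSum y k s (t * k + r) := by
  rw [blockSum, pow_succ', Finset.sum_range_mul_eq_sum_sum]
  refine Finset.sum_congr rfl fun r _ => Finset.sum_congr rfl fun q _ => ?_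
  congr 1
  ring

lemma exists_finsupp_sum_eq_smul_sum (y : ℕ → c00) (c : ℝ) {ι : Type*} (s : Finset ι)
    (g : ι → ℕ) : ∃ a : ℕ →₀ ℝ, (a.sum fun ℓ c => c • y ℓ) = c • ∑ i ∈ s, y (g i) := by
  refine ⟨∑ i ∈ s, Finsupp.single (g i) c, ?_⟩
  rw [← Finsupp.sum_finsetSum_index (fun ℓ => zero_smul ℝ (y ℓ)) fun ℓ _ _ => add_smul _ _ (y ℓ),
    Finset.smul_sum]
  exact Finset.sum_congr rfl fun i _ => Finsupp.sum_single_index (zero_smul ℝ _)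

lemma IsBlockSeq.blockLt_sum (hy : IsBlockSeq y) {ι κ : Type*} {s : Finset ι} {s' : Finset κ}
    {g : ι → ℕ} {g' : κ → ℕ} (h : ∀ i ∈ s, ∀ j ∈ s', g i < g' j) :
    blockLt (∑ i ∈ s, y (g i)) (∑ j ∈ s', y (g' j)) := by
  intro u hu v hv
  obtain ⟨i, hi, hu⟩ := Finset.mem_biUnion.mp (Finsupp.support_finsetSum hu)
  obtain ⟨j, hj, hv⟩ := Finset.mem_biUnion.mp (Finsupp.support_finsetSum hv)
  exact hy.blockLt_of_lt (h i hi j hj) u hu v hv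

lemma normK_blockSum_le (hy : IsBlockSeq y) (hny : ∀ ℓ, normK P C (y ℓ) = 1) {k : ℕ}
    (hk : 0 < k) (hnot : ∀ a : ℕ →₀ ℝ, normK P C (a.sum fun ℓ c => c • y ℓ) = 1 →
      ¬ IsL1Avg P C 2 k (a.sum fun ℓ c => c • y ℓ)) (s t : ℕ) :
    normK P C (blockSum y k s t) ≤ ((k : ℝ) / 2) ^ s := by
  induction s generalizing t with
  | zero => simp [blockSum, hny]
  | succ s ih =>
    rcases le_or_gt (normK P C (blockSum y k (s + 1) t)) 0 with h0 | hS
    · exact h0.trans (by positivity)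
    obtain ⟨a, ha⟩ := exists_finsupp_sum_eq_smul_sum y (normK P C (blockSum y k (s + 1) t))⁻¹
      (Finset.range (k ^ (s + 1))) (t * k ^ (s + 1) + ·)
    change _ = _ • blockSum y k (s + 1) t at ha
    have hnorm := normK_smul P C (inv_nonneg.mpr hS.le) (blockSum y k (s + 1) t)
    rw [inv_mul_cancel₀ hS.ne'] at hnorm
    have hblock : ∀ r, r + 1 < k →
        blockLt (blockSum y k s (t * k + r)) (blockSum y k s (t * k + (r + 1))) := by
      refine fun r _ => hy.blockLt_sum fun i hi j _ => ?_
      rw [Finset.mem_range] at hi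
      nlinarith
    have hnotS := hnot a (ha ▸ hnorm)
    rw [ha, blockSum_succ] at hnotS
    rw [blockSum_succ] at hS
    obtain ⟨r, hr, hlt⟩ := exists_lt_normK_of_not_isL1Avg P C hk hblock hS hnotS
    rw [← blockSum_succ] at hlt
    have := ih (t * k + r)
    rw [pow_succ]
    nlinarith

end Estimates

/-- For every normalized block sequence `(y_ℓ)` and every `k ≥ m_2`
there is a finite linear combination of `(y_ℓ)` which is a normalized
`2`-`ℓ_1^k` average. -/
theorem statement14 (P : Params) (C : Coding P) (y : ℕ → c00) (hy : IsBlockSeq y)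
    (hny : ∀ ℓ, normK P C (y ℓ) = 1) (k : ℕ) (hk : P.m 2 ≤ k) :
    ∃ a : ℕ →₀ ℝ, normK P C (a.sum fun ℓ c => c • y ℓ) = 1 ∧
      IsL1Avg P C 2 k (a.sum fun ℓ c => c • y ℓ) := by
  by_contra! hnot
  have hk2 : 2 ≤ k := (P.two_le_m one_le_two).trans hk
  have hm := P.two_le_m (j := 2 * k) (by omega)
  set N := P.s (2 * k - 1)
  have hrec : 2 * k - 1 + 1 = 2 * k := by omega
  have hkN : k ^ N ≤ P.n (2 * k) := by
    rw [← hrec, P.n_rec _ (by omega)]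
    exact Nat.pow_le_pow_left (by have := P.le_n (j := 2 * k - 1) (by omega); omega) N
  have hsN : P.m (2 * k) ^ 3 ≤ 2 ^ N := hrec ▸ P.s_big _ (by omega)
  have hlow := div_le_normK_sum P C hy hny (J := k) (by omega) (pow_ne_zero N (by omega)) hkN
    (0 * k ^ N)
  have hup := normK_blockSum_le P C hy hny (by omega) hnot N 0
  rw [blockSum] at hup
  have h2N : (2 : ℝ) ^ N ≤ P.m (2 * k) := by
    have := hlow.trans hup
    rw [div_pow, Nat.cast_pow] at this
    exact (div_le_div_iff_of_pos_left (by positivity) (by positivity) (by positivity)).mp this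
  have hcube : P.m (2 * k) < P.m (2 * k) ^ 3 := by
    simpa using Nat.pow_lt_pow_right hm (show 1 < 3 by norm_num)
  have : 2 ^ N ≤ P.m (2 * k) := by exact_mod_cast h2N
  omega

end Ius
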